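/- arXiv:1606.02803 — 8 statements merged into one kernel-verified Lean document; each statement's English description precedes it below -/
import Mathlib

section
/- Let p be an odd prime and let m, t, d, n be positive integers with d·t = p^(m-1)·(p-1). Then ∑_{i≥0} ⌊d·n/((p-1)·p^i)⌋ ≥ m·⌊n/t⌋ + ∑_{i≥1} ⌊n/(t·p^i)⌋ + ∑_{i≥1} ⌊d/p^i⌋. -/
/-!
Write `f i = ⌊dn / ((p-1)p^i)⌋`. Since `(p-1)p^i` divides `dt = p^(m-1)(p-1)` for `i < m` and is a
multiple of it for `i ≥ m`, the terms `i ≥ m` are exactly `⌊n / (t p^(i-m+1))⌋`, while `f (m-1-i) = ⌊n p^i / t⌋`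
for `i < m`. Each of these `m` terms is at least `⌊n/t⌋`, and for `i ≥ 1` the surplus also covers
`⌊d / p^(m-i)⌋ ≤ p^(i-1)(p-1) / t`; the terms `⌊d / p^j⌋` with `j ≥ m` vanish because `d < p^m`.
-/

open Finset

theorem Finset.sum_range_le_sum_range_of_eq_zero {M : Type*} [AddCommMonoid M] [PartialOrder M]
    [CanonicallyOrderedAdd M] {f : ℕ → M} {a b : ℕ} (hf : ∀ i, b ≤ i → f i = 0) :
    ∑ i ∈ range a, f i ≤ ∑ i ∈ range b, f i :=
  calc ∑ i ∈ range a, f i ≤ ∑ i ∈ range (b + a), f i :=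
        sum_le_sum_of_subset (range_subset_range.mpr (Nat.le_add_left a b))
    _ = ∑ i ∈ range b, f i := by
        rw [sum_range_add, sum_eq_zero fun i _ => hf (b + i) (Nat.le_add_right b i), add_zero]

theorem Nat.mul_div_eq_mul_div_of_mul_eq {b c d n t : ℕ} (hd : 0 < d) (hc : 0 < c)
    (h : b * c = d * t) : d * n / b = n * c / t := by
  rw [← Nat.mul_div_mul_right _ _ hc, h, mul_assoc, Nat.mul_div_mul_left _ _ hd]

theorem Nat.lt_pow_succ_of_mul_eq {p d t j : ℕ} (hp : 0 < p) (ht : 0 < t)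
    (hdt : d * t = p ^ j * (p - 1)) : d < p ^ (j + 1) :=
  calc d ≤ d * t := Nat.le_mul_of_pos_right d ht
    _ = p ^ j * (p - 1) := hdt
    _ < p ^ j * p := Nat.mul_lt_mul_of_pos_left (by omega) (by positivity)
    _ = p ^ (j + 1) := (pow_succ p j).symm

theorem Nat.div_add_div_pow_le {p d t n i k : ℕ} (hp : 0 < p) (ht : 0 < t) (hn : 0 < n)
    (hdt : d * t = p ^ (i + 1 + k) * (p - 1)) :
    n / t + d / p ^ (i + 1) ≤ n * p ^ (k + 1) / t := by
  rw [Nat.le_div_iff_mul_le ht, add_mul]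
  have hd : d / p ^ (i + 1) * t ≤ p ^ k * (p - 1) := by
    refine Nat.le_of_mul_le_mul_left ?_ (pow_pos hp (i + 1))
    calc p ^ (i + 1) * (d / p ^ (i + 1) * t) = p ^ (i + 1) * (d / p ^ (i + 1)) * t :=
          (mul_assoc _ _ _).symm
      _ ≤ d * t := Nat.mul_le_mul_right t (Nat.mul_div_le d _)
      _ = p ^ (i + 1) * (p ^ k * (p - 1)) := by rw [hdt, pow_add, mul_assoc]
  have hpk : p ^ k * (p - 1) + p ^ k = p ^ (k + 1) := by
    rw [← mul_add_one, Nat.sub_add_cancel hp, pow_succ]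
  have hq : 1 ≤ p ^ (k + 1) := Nat.one_le_pow _ _ hp
  have hq' : 1 ≤ p ^ k := Nat.one_le_pow _ _ hp
  have hnq : n + p ^ (k + 1) ≤ n * p ^ (k + 1) + 1 := by nlinarith
  have := Nat.div_mul_le_self n t
  omega

section

variable {p m t d : ℕ} (hdt : d * t = p ^ (m - 1) * (p - 1))
include hdt

theorem pred_mul_pow_mul_pow_sub {i : ℕ} (hi : i < m) :
    (p - 1) * p ^ i * p ^ (m - 1 - i) = d * t := by
  rw [mul_assoc, ← pow_add, Nat.add_sub_cancel' (by omega), hdt, mul_comm]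

theorem pred_mul_pow_add (hm : 0 < m) (i : ℕ) :
    (p - 1) * p ^ (m + i) = d * (t * p ^ (i + 1)) := by
  rw [← mul_assoc, hdt, show m + i = m - 1 + (i + 1) by omega, pow_add]
  ring

theorem mul_div_add_sum_div_pow_le (hp : 0 < p) (hm : 0 < m) (ht : 0 < t) (hn : 0 < n) :
    m * (n / t) + ∑ i ∈ range (d + 1), d / p ^ (i + 1) ≤
      ∑ i ∈ range m, n * p ^ (m - 1 - i) / t := by
  obtain ⟨k, rfl⟩ : ∃ k, m = k + 1 := ⟨m - 1, by omega⟩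
  rw [Nat.add_sub_cancel] at hdt ⊢
  have hd_lt : d < p ^ (k + 1) := Nat.lt_pow_succ_of_mul_eq hp ht hdt
  have hd_sum : ∑ i ∈ range (d + 1), d / p ^ (i + 1) ≤ ∑ i ∈ range k, d / p ^ (i + 1) :=
    sum_range_le_sum_range_of_eq_zero fun i hi =>
      Nat.div_eq_of_lt (hd_lt.trans_le (Nat.pow_le_pow_right (by omega) (by omega)))
  have hterm : ∀ i ∈ range k, n / t + d / p ^ (i + 1) ≤ n * p ^ (k - i) / t := by
    intro i hi
    have hik : k - i = k - 1 - i + 1 := by have := mem_range.mp hi; omega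
    rw [hik]
    exact Nat.div_add_div_pow_le hp ht hn (by rwa [show i + 1 + (k - 1 - i) = k by omega])
  have hsum := sum_le_sum hterm
  rw [sum_add_distrib, sum_const, card_range, smul_eq_mul] at hsum
  rw [sum_range_succ (fun i => n * p ^ (k - i) / t), Nat.sub_self, pow_zero, mul_one, add_one_mul]
  omega

end

theorem minkowski_imprimitive_le_general
    (p m t d n : ℕ) (hp : p.Prime)
    (hm : 0 < m) (ht : 0 < t) (hd : 0 < d) (hn : 0 < n)
    (hdt : d * t = p ^ (m - 1) * (p - 1)) :
    ∑ i ∈ Finset.range (d * n + 1), d * n / ((p - 1) * p ^ i) ≥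
      m * (n / t) + (∑ i ∈ Finset.range (n + 1), n / (t * p ^ (i + 1))) +
        ∑ i ∈ Finset.range (d + 1), d / p ^ (i + 1) := by
  have hp2 := hp.two_le
  have hlow : ∀ i ∈ range m, d * n / ((p - 1) * p ^ i) = n * p ^ (m - 1 - i) / t :=
    fun i hi => Nat.mul_div_eq_mul_div_of_mul_eq hd (by positivity)
      (pred_mul_pow_mul_pow_sub hdt (mem_range.mp hi))
  have hhigh : ∀ i ∈ range (n + 1), d * n / ((p - 1) * p ^ (m + i)) = n / (t * p ^ (i + 1)) :=
    fun i _ => by rw [pred_mul_pow_add hdt hm, Nat.mul_div_mul_left _ _ hd]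
  have hvanish : ∀ i, d * n + 1 ≤ i → d * n / ((p - 1) * p ^ i) = 0 := fun i hi =>
    Nat.div_eq_of_lt <| calc
      d * n < i := hi
      _ < p ^ i := Nat.lt_pow_self hp.one_lt
      _ ≤ (p - 1) * p ^ i := Nat.le_mul_of_pos_left _ (by omega)
  calc m * (n / t) + (∑ i ∈ range (n + 1), n / (t * p ^ (i + 1))) +
        ∑ i ∈ range (d + 1), d / p ^ (i + 1)
      = (m * (n / t) + ∑ i ∈ range (d + 1), d / p ^ (i + 1)) +
          ∑ i ∈ range (n + 1), n / (t * p ^ (i + 1)) := add_right_comm _ _ _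
    _ ≤ ∑ i ∈ range m, n * p ^ (m - 1 - i) / t + ∑ i ∈ range (n + 1), n / (t * p ^ (i + 1)) :=
        Nat.add_le_add_right (mul_div_add_sum_div_pow_le hdt hp.pos hm ht hn) _
    _ = ∑ i ∈ range (m + (n + 1)), d * n / ((p - 1) * p ^ i) := by
        rw [sum_range_add (fun i => d * n / ((p - 1) * p ^ i)), sum_congr rfl hlow,
          sum_congr rfl hhigh]
    _ ≤ ∑ i ∈ range (d * n + 1), d * n / ((p - 1) * p ^ i) :=
        sum_range_le_sum_range_of_eq_zero hvanish

/-- Numerical content of Lemma 4.2 (Minkowski bound comparison for odd `p`):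
if `d * t = p^(m-1) * (p-1)`, then
`r(GL(dn)_ℚ, p) ≥ r(GL(n)_K, p) + r(S_d, p)`. -/
theorem minkowski_imprimitive_le
    (p m t d n : ℕ) (hp : p.Prime) (hodd : Odd p)
    (hm : 0 < m) (ht : 0 < t) (hd : 0 < d) (hn : 0 < n)
    (hdt : d * t = p ^ (m - 1) * (p - 1)) :
    ∑ i ∈ Finset.range (d * n + 1), d * n / ((p - 1) * p ^ i) ≥
      m * (n / t) + (∑ i ∈ Finset.range (n + 1), n / (t * p ^ (i + 1))) +
        ∑ i ∈ Finset.range (d + 1), d / p ^ (i + 1) :=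
  minkowski_imprimitive_le_general p m t d n hp hm ht hd hn hdt
end

section
/- Let p be an odd prime and let n, d be integers with n > 1 and d > 1. If ∑_{i≥0} ⌊d·n/((p-1)·p^i)⌋ > 0 (equivalently, d·n ≥ p-1), then ∑_{i≥0} ⌊d·n/((p-1)·p^i)⌋ > ∑_{i≥0} ⌊n/((p-1)·p^i)⌋ + ∑_{i≥1} ⌊d/p^i⌋. -/
/-!
Write `m = (p - 1) p^i`. Since `m ≤ p^(i+1)` and `n + d ≤ d n` for `n, d ≥ 2`,
each term satisfies
`⌊n/m⌋ + ⌊d/p^(i+1)⌋ ≤ ⌊n/m⌋ + ⌊d/m⌋ ≤ ⌊(n + d)/m⌋ ≤ ⌊d n/m⌋`,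
and the sums may all be taken over the same range since their terms vanish for `i > d n`.
So it suffices to see that the term `i = 0` gives a strict inequality, which is where
`p - 1 ≤ d n` and `p ≥ 3` enter.
-/

open Finset

lemma sum_range_succ_eq_of_eq_zero {M : Type*} [AddCommMonoid M] {f : ℕ → M} {m N : ℕ}
    (hmN : m ≤ N) (hf : ∀ i, m < i → f i = 0) :
    ∑ i ∈ range (m + 1), f i = ∑ i ∈ range (N + 1), f i :=
  sum_subset (range_subset_range.2 (by omega)) fun i _ hi ↦
    hf i (by simpa [Nat.lt_succ_iff] using hi)

lemma div_mul_pow_eq_zero {m c p i : ℕ} (hc : 0 < c) (hp : 1 < p) (hi : m < i) :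
    m / (c * p ^ i) = 0 :=
  Nat.div_eq_of_lt <| calc
    m < p ^ i := hi.trans (Nat.lt_pow_self hp)
    _ ≤ c * p ^ i := Nat.le_mul_of_pos_left _ hc

lemma div_add_div_le_mul_div {n d : ℕ} (hn : 2 ≤ n) (hd : 2 ≤ d) (m : ℕ) :
    n / m + d / m ≤ d * n / m :=
  Nat.div_add_div_le_add_div.trans (Nat.div_le_div_right (by nlinarith))

lemma div_add_div_pow_succ_le {p n d : ℕ} (hp : 2 ≤ p) (hn : 2 ≤ n) (hd : 2 ≤ d) (i : ℕ) :
    n / ((p - 1) * p ^ i) + d / p ^ (i + 1) ≤ d * n / ((p - 1) * p ^ i) := by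
  have hpos : 0 < (p - 1) * p ^ i := Nat.mul_pos (by omega) (by positivity)
  have hle : (p - 1) * p ^ i ≤ p ^ (i + 1) := by
    rw [pow_succ']
    exact Nat.mul_le_mul_right _ (Nat.sub_le p 1)
  calc n / ((p - 1) * p ^ i) + d / p ^ (i + 1)
      ≤ n / ((p - 1) * p ^ i) + d / ((p - 1) * p ^ i) :=
        Nat.add_le_add_left (Nat.div_le_div_left hle hpos) _
    _ ≤ d * n / ((p - 1) * p ^ i) := div_add_div_le_mul_div hn hd _

lemma div_add_div_lt_mul_div {p n d : ℕ} (hp : 3 ≤ p) (hn : 2 ≤ n) (hd : 2 ≤ d)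
    (hdn : p - 1 ≤ d * n) :
    n / (p - 1) + d / p < d * n / (p - 1) := by
  set q := p - 1
  have hq0 : 0 < q := by omega
  have hdp : d / p ≤ d / 3 := Nat.div_le_div_left hp (by norm_num)
  rcases lt_or_ge n q with hnq | hqn
  · rw [Nat.div_eq_of_lt hnq, zero_add]
    rcases lt_or_ge d q with hdq | hqd
    · rw [Nat.div_eq_of_lt (by omega : d < p)]
      exact Nat.div_pos hdn hq0
    · have h1 : d / p ≤ d / q := Nat.div_le_div_left (by omega) hq0
      have h2 : 0 < d / q := Nat.div_pos hqd hq0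
      have h3 : 2 * (d / q) ≤ 2 * d / q := Nat.mul_div_le_mul_div_assoc 2 d q
      have h4 : 2 * d / q ≤ d * n / q := Nat.div_le_div_right (by nlinarith)
      omega
  · have h1 : 0 < n / q := Nat.div_pos hqn hq0
    have h2 : d * (n / q) ≤ d * n / q := Nat.mul_div_le_mul_div_assoc d n q
    have h3 : n / q + (d - 1) ≤ d * (n / q) := by
      obtain ⟨e, rfl⟩ : ∃ e, d = e + 1 := ⟨d - 1, by omega⟩
      simp only [Nat.add_sub_cancel, add_mul, one_mul]
      nlinarith
    omega

theorem minkowski_tensor_lt_general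
    (p n d : ℕ) (hodd : Odd p) (hn : 1 < n) (hd : 1 < d)
    (hpos : 0 < ∑ i ∈ Finset.range (d * n + 1), d * n / ((p - 1) * p ^ i)) :
    ∑ i ∈ Finset.range (d * n + 1), d * n / ((p - 1) * p ^ i) >
      (∑ i ∈ Finset.range (n + 1), n / ((p - 1) * p ^ i)) +
        ∑ i ∈ Finset.range (d + 1), d / p ^ (i + 1) := by
  obtain ⟨i, -, hi⟩ := sum_pos_iff.mp hpos
  obtain ⟨hqi, hqi_le⟩ := Nat.div_pos_iff.mp hi
  have hq : p - 1 ≤ d * n :=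
    (Nat.le_mul_of_pos_right _ (Nat.pos_of_mul_pos_left hqi)).trans hqi_le
  have hp : 3 ≤ p := by
    have := Nat.odd_iff.mp hodd
    have := Nat.pos_of_mul_pos_right hqi
    omega
  have hn_sum := sum_range_succ_eq_of_eq_zero (f := fun i ↦ n / ((p - 1) * p ^ i))
    (m := n) (N := d * n) (by nlinarith) fun i hi ↦ div_mul_pow_eq_zero (by omega) (by omega) hi
  have hd_sum := sum_range_succ_eq_of_eq_zero (f := fun i ↦ d / p ^ (i + 1))
    (m := d) (N := d * n) (by nlinarith) fun i hi ↦ by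
      simpa [pow_succ'] using div_mul_pow_eq_zero (m := d) (by omega) (by omega) hi
  rw [hn_sum, hd_sum, ← sum_add_distrib]
  refine sum_lt_sum (fun i _ ↦ div_add_div_pow_succ_le (by omega) hn hd i)
    ⟨0, by simp, ?_⟩
  simpa using div_add_div_lt_mul_div hp hn hd hq

/-- Corollary 4.4 in numerical form: for an odd prime `p` and `n, d > 1`, if
`r(GL(dn)_ℚ, p) > 0` then `r(GL(dn)_ℚ, p) > r(GL(n)_ℚ, p) + v_p(d!)`. -/
theorem minkowski_tensor_lt
    (p n d : ℕ) (hp : p.Prime) (hodd : Odd p) (hn : 1 < n) (hd : 1 < d)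
    (hpos : 0 < ∑ i ∈ Finset.range (d * n + 1), d * n / ((p - 1) * p ^ i)) :
    ∑ i ∈ Finset.range (d * n + 1), d * n / ((p - 1) * p ^ i) >
      (∑ i ∈ Finset.range (n + 1), n / ((p - 1) * p ^ i)) +
        ∑ i ∈ Finset.range (d + 1), d / p ^ (i + 1) :=
  minkowski_tensor_lt_general p n d hodd hn hd hpos
end

section
/- Let n, d be integers with n > 1 and d > 1 such that d·n is even. Then d·n + ∑_{i≥2} ⌊d·n/2^i⌋ ≥ n + 2·⌊n/2⌋ + ∑_{i≥2} ⌊n/2^i⌋ + ∑_{i≥1} ⌊d/2^i⌋. -/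
/-!
With `v m := v₂(m!) = ∑_{i ≥ 1} ⌊m / 2^i⌋` (Legendre), the three sums are `v ⌊dn/2⌋`, `v ⌊n/2⌋` and
`v d`. Since `a! b! ∣ (ab)!` for `a, b ≥ 1` and `⌊n/2⌋ d ≤ ⌊dn/2⌋`, we get
`v ⌊n/2⌋ + v d ≤ v ⌊dn/2⌋`, and the remaining terms satisfy `n + 2⌊n/2⌋ ≤ 2n ≤ dn`.
-/

open Nat Finset

namespace Nat

theorem factorial_mul_factorial_dvd_factorial_mul {a b : ℕ} (ha : 1 ≤ a) (hb : 1 ≤ b) :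
    a ! * b ! ∣ (a * b)! := by
  rcases ha.eq_or_lt with rfl | ha
  · simp
  rcases hb.eq_or_lt with rfl | hb
  · simp
  exact (factorial_mul_factorial_dvd_factorial_add a b).trans
    (factorial_dvd_factorial (by nlinarith))

end Nat

section

variable {p : ℕ} [Fact p.Prime]

theorem padicValNat_le_of_dvd {a b : ℕ} (hb : b ≠ 0) (h : a ∣ b) :
    padicValNat p a ≤ padicValNat p b :=
  (padicValNat_dvd_iff_le hb).1 (pow_padicValNat_dvd.trans h)

theorem padicValNat_factorial_mono {m n : ℕ} (h : m ≤ n) :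
    padicValNat p m ! ≤ padicValNat p n ! :=
  padicValNat_le_of_dvd (factorial_ne_zero n) (factorial_dvd_factorial h)

theorem padicValNat_factorial_add_le_mul {a b : ℕ} (ha : 1 ≤ a) (hb : 1 ≤ b) :
    padicValNat p a ! + padicValNat p b ! ≤ padicValNat p (a * b)! := by
  rw [← padicValNat.mul (factorial_ne_zero a) (factorial_ne_zero b)]
  exact padicValNat_le_of_dvd (factorial_ne_zero _) (factorial_mul_factorial_dvd_factorial_mul ha hb)

theorem padicValNat_factorial_eq_sum_range {m K : ℕ} (h : log p m ≤ K) :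
    padicValNat p m ! = ∑ i ∈ range K, m / p ^ (i + 1) := by
  rw [padicValNat_factorial (Nat.lt_succ_of_le h), Finset.sum_Ico_eq_sum_range, succ_sub_one]
  simp only [add_comm 1]

theorem padicValNat_factorial_div_eq_sum_range {m K : ℕ} (h : log p (m / p) ≤ K) :
    padicValNat p (m / p)! = ∑ i ∈ range K, m / p ^ (i + 2) := by
  rw [padicValNat_factorial_eq_sum_range h]
  simp only [Nat.div_div_eq_div_mul, ← pow_succ']

end

theorem minkowski_two_imprimitive_le_general
    (n d : ℕ) (hn : 1 < n) (hd : 1 < d) :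
    d * n + (∑ i ∈ Finset.range (d * n + 1), d * n / 2 ^ (i + 2)) ≥
      n + 2 * (n / 2) + (∑ i ∈ Finset.range (n + 1), n / 2 ^ (i + 2)) +
        ∑ i ∈ Finset.range (d + 1), d / 2 ^ (i + 1) := by
  have hle {m K : ℕ} (h : m ≤ K) : log 2 m ≤ K := (log_le_self 2 m).trans h
  rw [← padicValNat_factorial_div_eq_sum_range (hle (by omega)),
    ← padicValNat_factorial_div_eq_sum_range (hle (by omega)),
    ← padicValNat_factorial_eq_sum_range (hle (by omega))]
  have hval : padicValNat 2 (n / 2)! + padicValNat 2 d ! ≤ padicValNat 2 (d * n / 2)! :=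
    calc _ ≤ padicValNat 2 (n / 2 * d)! := padicValNat_factorial_add_le_mul (by omega) (by omega)
      _ ≤ _ := padicValNat_factorial_mono <|
        (Nat.le_div_iff_mul_le two_pos).2 (by nlinarith [Nat.div_mul_le_self n 2])
  have hlin : n + 2 * (n / 2) ≤ d * n := by nlinarith [Nat.mul_div_le n 2]
  omega

/-- Inequality of Lemma 4.6: for `n, d > 1` with `d * n` even and `g = d * n / 2`,
`r(GL(g)_{ℚ(i)}, 2) ≥ r(GL(n)_ℚ, 2) + r(S_d, 2)`. -/
theorem minkowski_two_imprimitive_le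
    (n d : ℕ) (hn : 1 < n) (hd : 1 < d) (he : Even (d * n)) :
    d * n + (∑ i ∈ Finset.range (d * n + 1), d * n / 2 ^ (i + 2)) ≥
      n + 2 * (n / 2) + (∑ i ∈ Finset.range (n + 1), n / 2 ^ (i + 2)) +
        ∑ i ∈ Finset.range (d + 1), d / 2 ^ (i + 1) :=
  minkowski_two_imprimitive_le_general n d hn hd
end

section
/- Let n, d be integers with n > 1 and d > 1 such that d·n is even. Then equality d·n + ∑_{i≥2} ⌊d·n/2^i⌋ = n + 2·⌊n/2⌋ + ∑_{i≥2} ⌊n/2^i⌋ + ∑_{i≥1} ⌊d/2^i⌋ holds if and only if n = 2 and d = 2. -/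
/-!
By Legendre's formula `∑_{i ≥ 1} ⌊m / 2^i⌋ = m - s(m)`, where `s` is the binary digit sum, the
equation becomes `2n + ⌊n/2⌋ + d + s(dn) = 3dn/2 + s(n) + s(d)`. Since `s(2k) = s(k)`, the cases
`n = 2` and `d = 2` reduce to linear arithmetic; for `n, d ≥ 3` the crude bounds
`s(dn) = s(dn/2) ≤ dn/2` and `s(n), s(d) ≥ 1` already make the right-hand side strictly larger.
-/

open Finset

namespace Nat

theorem sum_range_div_two_pow_succ_add_digits_sum {m L : ℕ} (hL : log 2 m < L) :
    ∑ i ∈ range L, m / 2 ^ (i + 1) + (digits 2 m).sum = m := by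
  have hvanish : ∀ i ≥ log 2 m + 1, m / 2 ^ (i + 1) = 0 := fun i hi =>
    div_eq_of_lt ((lt_pow_succ_log_self one_lt_two m).trans_le
      (Nat.pow_le_pow_right two_pos (by omega)))
  have hLegendre := sub_one_mul_sum_log_div_pow_eq_sub_sum_digits (p := 2) m
  rw [eventually_constant_sum hvanish hL]
  have := digit_sum_le 2 m
  simp only [succ_eq_add_one, Nat.add_one_sub_one, one_mul] at hLegendre
  omega

theorem div_two_add_sum_range_div_two_pow_add_two_add_digits_sum {m L : ℕ} (hL : log 2 m ≤ L) :
    m / 2 + ∑ i ∈ range L, m / 2 ^ (i + 2) + (digits 2 m).sum = m := by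
  have h := sum_range_div_two_pow_succ_add_digits_sum (m := m) (L := L + 1) (by omega)
  rw [sum_range_succ'] at h
  simp only [zero_add, pow_one, add_assoc, Nat.reduceAdd] at h
  omega

theorem digits_sum_two_mul (k : ℕ) : (digits 2 (2 * k)).sum = (digits 2 k).sum := by
  rcases k.eq_zero_or_pos with rfl | hk
  · rfl
  · simp [digits_base_mul one_lt_two hk]

theorem one_le_digits_sum {b m : ℕ} (hm : m ≠ 0) : 1 ≤ (digits b m).sum :=
  (one_le_iff_ne_zero.mpr (getLast_digit_ne_zero b hm)).trans
    (List.le_sum_of_mem (List.getLast_mem _))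

end Nat

open Nat in
theorem add_digits_sum_lt_of_ne {n d : ℕ} (hn : 1 < n) (hd : 1 < d) (he : Even (d * n))
    (hne : ¬(n = 2 ∧ d = 2)) :
    2 * n + n / 2 + d + (digits 2 (d * n)).sum <
      3 * (d * n / 2) + (digits 2 n).sum + (digits 2 d).sum := by
  obtain ⟨k, hk⟩ := even_iff_exists_two_mul.mp he
  have hsn := one_le_digits_sum (b := 2) (m := n) (by omega)
  have hsd := one_le_digits_sum (b := 2) (m := d) (by omega)
  have hs2 : (digits 2 2).sum = 1 := by decide
  rw [hk, digits_sum_two_mul]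
  by_cases hn2 : n = 2
  · subst hn2
    rw [show k = d by omega]
    omega
  by_cases hd2 : d = 2
  · subst hd2
    rw [show k = n by omega]
    omega
  have hk' := digit_sum_le 2 k
  have hprod : 3 * d + 3 * n ≤ d * n + 9 := by
    have hn3 : 3 ≤ n := by omega
    have hd3 : 3 ≤ d := by omega
    nlinarith
  omega

/-- Equality case of Lemma 4.6: for `n, d > 1` with `d * n` even, equality in the
2-adic Minkowski comparison holds if and only if `n = 2` and `d = 2`. -/
theorem minkowski_two_imprimitive_eq_iff
    (n d : ℕ) (hn : 1 < n) (hd : 1 < d) (he : Even (d * n)) :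
    (d * n + (∑ i ∈ Finset.range (d * n + 1), d * n / 2 ^ (i + 2)) =
      n + 2 * (n / 2) + (∑ i ∈ Finset.range (n + 1), n / 2 ^ (i + 2)) +
        ∑ i ∈ Finset.range (d + 1), d / 2 ^ (i + 1)) ↔ (n = 2 ∧ d = 2) := by
  refine ⟨fun E => ?_, fun ⟨hn2, hd2⟩ => by subst hn2 hd2; decide⟩
  by_contra hne
  have hlt := add_digits_sum_lt_of_ne hn hd he hne
  have hsum_dn := Nat.div_two_add_sum_range_div_two_pow_add_two_add_digits_sum
    (m := d * n) (L := d * n + 1) (by have := Nat.log_le_self 2 (d * n); omega)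
  have hsum_n := Nat.div_two_add_sum_range_div_two_pow_add_two_add_digits_sum
    (m := n) (L := n + 1) (by have := Nat.log_le_self 2 n; omega)
  have hsum_d := Nat.sum_range_div_two_pow_succ_add_digits_sum
    (m := d) (L := d + 1) (by have := Nat.log_le_self 2 d; omega)
  omega
end

section
/- Let p be an odd prime and d ≥ 1 an integer. Then ∑_{i≥0} ⌊d/((p-1)·p^i)⌋ ≥ ∑_{i≥1} ⌊d/p^i⌋, and the inequality is strict whenever d ≥ p·(p-1). -/
namespace Nat

theorem div_pow_succ_le_div_pred_mul_pow {p : ℕ} (hp : 1 < p) (d i : ℕ) :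
    d / p ^ (i + 1) ≤ d / ((p - 1) * p ^ i) := by
  apply Nat.div_le_div_left _ (Nat.mul_pos (by omega) (pow_pos (by omega) i))
  rw [pow_succ']
  exact Nat.mul_le_mul_right _ (Nat.sub_le p 1)

/-- With `m = d / p ≥ p - 1`: `(m + 1) (p - 1) ≤ m p ≤ d`. -/
theorem div_lt_div_pred {p d : ℕ} (hp : 1 < p) (hd : p * (p - 1) ≤ d) :
    d / p < d / (p - 1) := by
  obtain ⟨q, rfl⟩ : ∃ q, p = q + 1 := ⟨p - 1, by omega⟩
  rw [Nat.add_sub_cancel] at hd ⊢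
  have hq : q ≤ d / (q + 1) := (Nat.le_div_iff_mul_le (by omega)).mpr (by rwa [mul_comm])
  have hmul : d / (q + 1) * (q + 1) ≤ d := Nat.div_mul_le_self d (q + 1)
  rw [Nat.lt_iff_add_one_le, Nat.le_div_iff_mul_le (by omega)]
  nlinarith

end Nat

theorem minkowski_symmetric_le_general
    (p d : ℕ) (hp : p.Prime) :
    ((∑ i ∈ Finset.range (d + 1), d / ((p - 1) * p ^ i)) ≥
        ∑ i ∈ Finset.range (d + 1), d / p ^ (i + 1)) ∧
      (p * (p - 1) ≤ d →
        (∑ i ∈ Finset.range (d + 1), d / ((p - 1) * p ^ i)) >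
          ∑ i ∈ Finset.range (d + 1), d / p ^ (i + 1)) := by
  have hterm : ∀ i ∈ Finset.range (d + 1), d / p ^ (i + 1) ≤ d / ((p - 1) * p ^ i) :=
    fun i _ => Nat.div_pow_succ_le_div_pred_mul_pow hp.one_lt d i
  refine ⟨Finset.sum_le_sum hterm, fun hdp => Finset.sum_lt_sum hterm ⟨0, by simp, ?_⟩⟩
  simpa using Nat.div_lt_div_pred hp.one_lt hdp

/-- Base case used in the proof of Lemma 4.2: `r(GL(d)_ℚ, p) ≥ r(S_d, p) = v_p(d!)`,
with strict inequality for `d ≥ p * (p-1)`. -/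
theorem minkowski_symmetric_le
    (p d : ℕ) (hp : p.Prime) (hodd : Odd p) (hd : 1 ≤ d) :
    ((∑ i ∈ Finset.range (d + 1), d / ((p - 1) * p ^ i)) ≥
        ∑ i ∈ Finset.range (d + 1), d / p ^ (i + 1)) ∧
      (p * (p - 1) ≤ d →
        (∑ i ∈ Finset.range (d + 1), d / ((p - 1) * p ^ i)) >
          ∑ i ∈ Finset.range (d + 1), d / p ^ (i + 1)) :=
  minkowski_symmetric_le_general p d hp
end

section
/- For a prime p and a positive integer g, define r(g,p) := ∑_{i≥0} ⌊2g/((p-1)·p^i)⌋, and define r'(g,p) := r(g,p) - g - 1 if p = 2, r'(g,p) := max{0, r(g,p) - 1} if p is a Fermat prime (i.e., p is an odd prime such that p - 1 is a power of 2), and r'(g,p) := r(g,p) otherwise. Then for every fixed prime p, the function g ↦ r'(g,p) is superadditive: for all positive integers g₁, g₂ one has r'(g₁+g₂, p) ≥ r'(g₁, p) + r'(g₂, p). -/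
open scoped Classical

/-- The quantity `r(g,p)` from the introduction: `∑_{i≥0} ⌊2g/((p-1)p^i)⌋`. -/
def minkowskiR (g p : ℕ) : ℕ :=
  ∑ i ∈ Finset.range (2 * g + 1), 2 * g / ((p - 1) * p ^ i)

/-- The refined exponent `r'(g,p)` of Theorem 1.2: `r(g,p) - g - 1` for `p = 2`,
`max 0 (r(g,p) - 1)` for `p` a Fermat prime, and `r(g,p)` otherwise. -/
noncomputable def minkowskiR' (g p : ℕ) : ℕ :=
  if p = 2 then minkowskiR g p - g - 1
  else if ∃ k : ℕ, p - 1 = 2 ^ k then max 0 (minkowskiR g p - 1)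
  else minkowskiR g p

/-!
Each floor `⌊2g/((p-1)p^i)⌋` is superadditive in `g`, hence so is `r(·,p)`. Subtracting the
additive function `g` keeps superadditivity as long as nothing is truncated, which holds for
`p = 2` because the `i = 0` term of `r(g,2)` is already `2g`. Finally, truncated subtraction
of `1` preserves superadditivity of any `ℕ`-valued function: if one summand vanishes this is
monotonicity, otherwise one loses `2` on the right and only `1` on the left.
-/

def Superadditive (f : ℕ → ℕ) : Prop :=
  ∀ m n, f m + f n ≤ f (m + n)

namespace Superadditive

variable {f : ℕ → ℕ}

theorem tsub_one (hf : Superadditive f) : Superadditive fun g ↦ f g - 1 := by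
  intro m n
  have := hf m n
  dsimp only
  omega

theorem tsub_id (hf : Superadditive f) (hle : ∀ g, g ≤ f g) :
    Superadditive fun g ↦ f g - g := by
  intro m n
  have := hf m n
  have := hle m
  have := hle n
  dsimp only
  omega

end Superadditive

theorem minkowskiR_le_sum_range (g p : ℕ) {N : ℕ} (hN : 2 * g + 1 ≤ N) :
    minkowskiR g p ≤ ∑ i ∈ Finset.range N, 2 * g / ((p - 1) * p ^ i) :=
  Finset.sum_le_sum_of_subset (Finset.range_subset_range.2 hN)

theorem superadditive_minkowskiR (p : ℕ) : Superadditive (minkowskiR · p) := by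
  intro m n
  calc minkowskiR m p + minkowskiR n p
      ≤ ∑ i ∈ Finset.range (2 * (m + n) + 1),
          (2 * m / ((p - 1) * p ^ i) + 2 * n / ((p - 1) * p ^ i)) := by
        rw [Finset.sum_add_distrib]
        exact add_le_add (minkowskiR_le_sum_range m p (by omega))
          (minkowskiR_le_sum_range n p (by omega))
    _ ≤ minkowskiR (m + n) p := by
        refine Finset.sum_le_sum fun i _ ↦ ?_
        rw [mul_add]
        exact Nat.div_add_div_le_add_div

theorem two_mul_le_minkowskiR_two (g : ℕ) : 2 * g ≤ minkowskiR g 2 := by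
  simpa [minkowskiR] using Finset.single_le_sum (f := fun i ↦ 2 * g / ((2 - 1) * 2 ^ i))
    (fun _ _ ↦ Nat.zero_le _) (Finset.mem_range.2 (Nat.succ_pos (2 * g)))

theorem superadditive_minkowskiR' (p : ℕ) : Superadditive (minkowskiR' · p) := by
  have hR := superadditive_minkowskiR p
  by_cases h2 : p = 2
  · subst h2
    simpa only [minkowskiR', if_true] using
      (hR.tsub_id fun g ↦ by have := two_mul_le_minkowskiR_two g; omega).tsub_one
  by_cases hF : ∃ k : ℕ, p - 1 = 2 ^ k
  · simpa only [minkowskiR', h2, hF, if_true, if_false, Nat.zero_max] using hR.tsub_one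
  · simpa only [minkowskiR', h2, hF, if_false] using hR

theorem minkowskiR'_superadditive_general (p : ℕ) (g₁ g₂ : ℕ) :
    minkowskiR' (g₁ + g₂) p ≥ minkowskiR' g₁ p + minkowskiR' g₂ p :=
  superadditive_minkowskiR' p g₁ g₂

/-- Superadditivity of `g ↦ r'(g,p)` for each fixed prime `p` (reduction step in the
proof of Theorem 5.3). -/
theorem minkowskiR'_superadditive (p : ℕ) (hp : p.Prime) (g₁ g₂ : ℕ)
    (h₁ : 0 < g₁) (h₂ : 0 < g₂) :
    minkowskiR' (g₁ + g₂) p ≥ minkowskiR' g₁ p + minkowskiR' g₂ p :=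
  minkowskiR'_superadditive_general p g₁ g₂
end

section
/- Let p be an odd prime, let n ≥ 1 be an integer, and set m := ⌊n/(p-1)⌋. Then there exists an injective group homomorphism from the wreath product C_p ≀ S_m — realized as the semidirect product of the group of functions Fin m → ZMod p (under pointwise addition) by the symmetric group Equiv.Perm (Fin m) acting by permuting coordinates — into the group GL(Fin n, ℚ) of invertible n × n rational matrices. -/
open Matrix

/-- The action of the symmetric group on the group `Fin m → G` (written
multiplicatively via `Multiplicative`) by permuting coordinates:
`(σ • f) j = f (σ⁻¹ j)`. -/
def permCoordAut (m : ℕ) (G : Type*) [AddCommGroup G] :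
    Equiv.Perm (Fin m) →* MulAut (Multiplicative (Fin m → G)) where
  toFun σ :=
    (MulEquiv.funMultiplicative (Fin m) G).trans
      ((MulEquiv.arrowCongr σ (MulEquiv.refl (Multiplicative G))).trans
        (MulEquiv.funMultiplicative (Fin m) G).symm)
  map_one' := by ext f; rfl
  map_mul' σ τ := by ext f; rfl

/-!
`C_p` acts faithfully and `ℚ`-linearly on the cyclotomic field `ℚ(ζ_p)`, of dimension `p - 1`,
by multiplication with powers of `ζ_p`. Letting `C_p ≀ S_m` act monomially on `ℚ(ζ_p)^m`
(coordinatewise scaling, then permuting the coordinates) gives a faithful representation of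
dimension `m (p - 1) ≤ n`, which we pad by the identity to dimension `n`.
-/

open Function Module

section WreathRepresentation

variable {R M A : Type*} [Semiring R] [AddCommMonoid M] [Module R M] [AddCommGroup A] (m : ℕ)

def coordwiseLinearEquiv (χ : Multiplicative A →* (M ≃ₗ[R] M)) :
    Multiplicative (Fin m → A) →* ((Fin m → M) ≃ₗ[R] (Fin m → M)) where
  toFun f := LinearEquiv.piCongrRight fun j => χ (.ofAdd (f.toAdd j))
  map_one' := by ext v j; simp
  map_mul' f g := by ext v j; simp

variable (R M) in
def permLinearEquiv : Equiv.Perm (Fin m) →* ((Fin m → M) ≃ₗ[R] (Fin m → M)) where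
  toFun σ := LinearEquiv.funCongrLeft R M σ⁻¹
  map_one' := rfl
  map_mul' _ _ := rfl

variable {m}

def wreathRepresentation (χ : Multiplicative A →* (M ≃ₗ[R] M)) :
    (Multiplicative (Fin m → A) ⋊[permCoordAut m A] Equiv.Perm (Fin m)) →*
      ((Fin m → M) ≃ₗ[R] (Fin m → M)) :=
  SemidirectProduct.lift (coordwiseLinearEquiv m χ) (permLinearEquiv R M m) fun σ => by
    ext f v j
    change χ _ (v j) = χ _ (v (σ (σ.symm j)))
    rw [Equiv.apply_symm_apply]
    rfl

theorem wreathRepresentation_apply (χ : Multiplicative A →* (M ≃ₗ[R] M))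
    (g : Multiplicative (Fin m → A) ⋊[permCoordAut m A] Equiv.Perm (Fin m)) (v : Fin m → M)
    (j : Fin m) :
    wreathRepresentation χ g v j = χ (.ofAdd (g.left.toAdd j)) (v (g.right⁻¹ j)) :=
  rfl

theorem wreathRepresentation_injective [Nontrivial M] {χ : Multiplicative A →* (M ≃ₗ[R] M)}
    (hχ : Injective χ) : Injective (wreathRepresentation (m := m) χ) := by
  rw [injective_iff_map_eq_one]
  rintro ⟨f, σ⟩ h
  have fixed (v : Fin m → M) (j : Fin m) : χ (.ofAdd (f.toAdd j)) (v (σ⁻¹ j)) = v j := by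
    rw [← wreathRepresentation_apply χ ⟨f, σ⟩, h]
    rfl
  obtain ⟨x, hx⟩ := exists_ne (0 : M)
  have hσ : σ = 1 := Equiv.ext fun k => by
    by_contra hk
    rw [Equiv.Perm.one_apply] at hk
    simpa [Pi.single_apply, hk, hx] using fixed (Pi.single k x) (σ k)
  have hf (j : Fin m) : Multiplicative.ofAdd (f.toAdd j) = 1 :=
    hχ.eq_iff' (map_one χ) |>.mp <| LinearEquiv.ext fun y => by
      have hj : σ⁻¹ j = j := by rw [hσ]; rfl
      simpa [hj] using fixed (Pi.single j y) j
  have hf' : f = 1 := Multiplicative.toAdd.injective <| funext fun j => by simpa using hf j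
  rw [hf', hσ]
  rfl

end WreathRepresentation

theorem IsPrimitiveRoot.exists_injective_zmod_hom_linearEquiv {R L : Type*} [CommSemiring R]
    [CommRing L] [Algebra R L] {ζ : L} {k : ℕ} [NeZero k] (hζ : IsPrimitiveRoot ζ k) :
    ∃ χ : Multiplicative (ZMod k) →* (L ≃ₗ[R] L), Injective χ := by
  have hu := hζ.isUnit_unit (NeZero.ne k)
  have toModuleAut_injective : Injective (DistribMulAction.toModuleAut R L : Lˣ →* _) :=
    fun u v h => Units.ext (by simpa [Units.smul_def] using LinearEquiv.congr_fun h 1)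
  exact ⟨(DistribMulAction.toModuleAut R L).comp <| (Subgroup.zpowers _).subtype.comp
      (AddEquiv.toMultiplicativeLeft hu.zmodEquivZPowers).toMonoidHom,
    toModuleAut_injective.comp <| Subtype.val_injective.comp (MulEquiv.injective _)⟩

theorem exists_injective_hom_GL_of_finrank_le {K V : Type*} [Field K] [AddCommGroup V] [Module K V]
    [FiniteDimensional K V] {n : ℕ} (h : finrank K V ≤ n) :
    ∃ ρ : (V ≃ₗ[K] V) →* GL (Fin n) K, Injective ρ := by
  let W := V × (Fin (n - finrank K V) → K)
  have hW : finrank K W = n := by rw [finrank_prod, finrank_fin_fun]; omega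
  let toGL : (W ≃ₗ[K] W) ≃* GL (Fin n) K :=
    (LinearMap.GeneralLinearGroup.generalLinearEquiv K W).symm.trans
      (Matrix.GeneralLinearGroup.toLin' (finBasisOfFinrankEq K W hW)).symm
  let extendById : (V ≃ₗ[K] V) →* (W ≃ₗ[K] W) :=
    { toFun e := e.prodCongr (.refl K _), map_one' := rfl, map_mul' _ _ := rfl }
  have extendById_injective : Injective extendById := fun e₁ e₂ he =>
    LinearEquiv.ext fun v => congr_arg Prod.fst (LinearEquiv.congr_fun he (v, 0))
  exact ⟨toGL.toMonoidHom.comp extendById, toGL.injective.comp extendById_injective⟩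

theorem wreath_embeds_GL_rat_general (p : ℕ) (hp : p.Prime) (n : ℕ) :
    ∃ f : (Multiplicative (Fin (n / (p - 1)) → ZMod p)
          ⋊[permCoordAut (n / (p - 1)) (ZMod p)] Equiv.Perm (Fin (n / (p - 1)))) →*
        GL (Fin n) ℚ,
      Function.Injective f := by
  have : NeZero p := ⟨hp.ne_zero⟩
  -- The instance for `CyclotomicField` is stated for a different `Algebra ℚ` instance.
  have : IsCyclotomicExtension {p} ℚ (CyclotomicField p ℚ) := by
    convert CyclotomicField.isCyclotomicExtension p ℚ
    · rfl
    · exact Subsingleton.elim _ _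
  obtain ⟨χ, hχ⟩ := (IsCyclotomicExtension.zeta_spec p ℚ (CyclotomicField p ℚ)
    |>.exists_injective_zmod_hom_linearEquiv (R := ℚ))
  have hK : finrank ℚ (CyclotomicField p ℚ) = p - 1 := by
    rw [IsCyclotomicExtension.finrank _ (Polynomial.cyclotomic.irreducible_rat hp.pos),
      Nat.totient_prime hp]
  have hdim : finrank ℚ (Fin (n / (p - 1)) → CyclotomicField p ℚ) ≤ n := by
    simpa [finrank_pi_fintype, hK] using Nat.div_mul_le_self n (p - 1)
  obtain ⟨ρ, hρ⟩ := exists_injective_hom_GL_of_finrank_le hdim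
  exact ⟨ρ.comp (wreathRepresentation χ), hρ.comp (wreathRepresentation_injective hχ)⟩

/-- Remark 3.4: the wreath product `C_p ≀ S_{⌊n/(p-1)⌋}` embeds into `GL(n, ℚ)`. -/
theorem wreath_embeds_GL_rat (p : ℕ) (hp : p.Prime) (hodd : Odd p) (n : ℕ) (hn : 1 ≤ n) :
    ∃ f : (Multiplicative (Fin (n / (p - 1)) → ZMod p)
          ⋊[permCoordAut (n / (p - 1)) (ZMod p)] Equiv.Perm (Fin (n / (p - 1)))) →*
        GL (Fin n) ℚ,
      Function.Injective f :=
  wreath_embeds_GL_rat_general p hp n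
end

section
/- Let p be an odd prime, let q be a prime different from p, and let n ≥ 1 be an integer. Then the p-adic valuation of the order of the finite group GL(Fin n, ZMod q) satisfies v_p(|GL(n, 𝔽_q)|) ≥ ∑_{i≥0} ⌊n/((p-1)·p^i)⌋. -/
/-!
Up to a power of `q`, `|GL(n, 𝔽_q)| = ∏_{k=1}^n (q^k - 1)`. By Fermat, `p ∣ q^(p-1) - 1`, so
lifting the exponent gives `v_p(q^((p-1)m) - 1) ≥ 1 + v_p(m)`. Keeping only the factors with
`k = (p-1)m`, `m ≤ N := ⌊n/(p-1)⌋`, the valuation is at least `N + v_p(N!)`, which by Legendre's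
formula is `∑_i ⌊N/p^i⌋ = ∑_i ⌊n/((p-1)p^i)⌋`.
-/

open Matrix

open Finset Nat

theorem padicValNat_prod {p : ℕ} [Fact p.Prime] {ι : Type*} {s : Finset ι} {f : ι → ℕ}
    (hf : ∀ i ∈ s, f i ≠ 0) :
    padicValNat p (∏ i ∈ s, f i) = ∑ i ∈ s, padicValNat p (f i) := by
  simp_rw [← Nat.factorization_def _ Fact.out]
  exact Nat.factorization_prod_apply hf

theorem padicValNat_factorial_eq_sum_Icc {p : ℕ} [Fact p.Prime] (N : ℕ) :
    padicValNat p N ! = ∑ m ∈ Icc 1 N, padicValNat p m := by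
  rw [← prod_Ico_id_eq_factorial, Ico_add_one_right_eq_Icc,
    padicValNat_prod fun m hm => by grind]

theorem sum_range_div_pow_eq_add_padicValNat_factorial {p : ℕ} [Fact p.Prime] {N b : ℕ}
    (hN : N ≤ b) : ∑ i ∈ range (b + 1), N / p ^ i = N + padicValNat p N ! := by
  rw [range_eq_Ico, sum_eq_sum_Ico_succ_bot (by omega), pow_zero, Nat.div_one,
    padicValNat_factorial (Nat.lt_succ_of_le ((Nat.log_le_self p N).trans hN))]

theorem one_add_padicValNat_le_padicValNat_pow_sub_one {p : ℕ} [hp : Fact p.Prime]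
    (hodd : Odd p) {x m : ℕ} (hx : 1 < x) (hpx : p ∣ x - 1) (hm : m ≠ 0) :
    1 + padicValNat p m ≤ padicValNat p (x ^ m - 1) := by
  have hpx' : ¬ p ∣ x := fun h => hp.out.not_dvd_one <| by
    simpa [Nat.sub_sub_self hx.le] using Nat.dvd_sub h hpx
  have hlte := padicValNat.pow_sub_pow (y := 1) hodd hx (by simpa using hpx) hpx' hm
  have hpos := one_le_padicValNat_of_dvd (by omega) hpx
  rw [one_pow] at hlte
  omega

theorem sum_Icc_div_comp_mul_le {M : Type*} [AddCommMonoid M] [PartialOrder M]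
    [CanonicallyOrderedAdd M] {d : ℕ} (hd : d ≠ 0) (f : ℕ → M) (n : ℕ) :
    ∑ m ∈ Icc 1 (n / d), f (d * m) ≤ ∑ k ∈ Icc 1 n, f k := by
  rw [← sum_image (f := f) fun a _ b _ h => Nat.eq_of_mul_eq_mul_left (by omega) h]
  refine sum_le_sum_of_subset fun k hk => ?_
  simp only [mem_image, mem_Icc] at hk ⊢
  obtain ⟨m, ⟨hm1, hmn⟩, rfl⟩ := hk
  exact ⟨Nat.one_le_iff_ne_zero.mpr (mul_ne_zero hd (by omega)),
    mul_comm d m ▸ (Nat.le_div_iff_mul_le (by omega)).mp hmn⟩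

theorem padicValNat_pow_sub_pow_eq_padicValNat_pow_sub_one {p : ℕ} [Fact p.Prime] {q : ℕ}
    (hpq : ¬ p ∣ q) {i n : ℕ} (hin : i ≤ n) :
    padicValNat p (q ^ n - q ^ i) = padicValNat p (q ^ (n - i) - 1) := by
  have hq : q ≠ 0 := by rintro rfl; exact hpq (dvd_zero p)
  obtain ⟨k, rfl⟩ := Nat.exists_eq_add_of_le hin
  rw [pow_add, ← Nat.mul_sub_one, add_tsub_cancel_left]
  rcases eq_or_ne (q ^ k - 1) 0 with h | h
  · rw [h, mul_zero]
  · rw [padicValNat.mul (pow_ne_zero _ hq) h, padicValNat.pow,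
      padicValNat.eq_zero_of_not_dvd hpq, mul_zero, zero_add]

theorem padicValNat_card_GL_eq_sum {𝔽 : Type*} [Field 𝔽] [Fintype 𝔽] {p : ℕ} [Fact p.Prime]
    (hp : ¬ p ∣ Fintype.card 𝔽) (n : ℕ) :
    padicValNat p (Nat.card (GL (Fin n) 𝔽)) =
      ∑ k ∈ Icc 1 n, padicValNat p (Fintype.card 𝔽 ^ k - 1) := by
  set q := Fintype.card 𝔽
  have hq : 1 < q := Fintype.one_lt_card
  rw [card_GL_field, padicValNat_prod fun i _ => Nat.sub_ne_zero_of_lt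
      (Nat.pow_lt_pow_right hq i.isLt),
    Fin.sum_univ_eq_sum_range fun i => padicValNat p (q ^ n - q ^ i)]
  have hmem {i : ℕ} (hi : i ∈ range n) : n - i ∈ Icc 1 n := by
    simp only [mem_range, mem_Icc] at hi ⊢; omega
  have hmem' {k : ℕ} (hk : k ∈ Icc 1 n) : n - k ∈ range n := by
    simp only [mem_range, mem_Icc] at hk ⊢; omega
  exact sum_nbij' (n - ·) (n - ·) (fun i => hmem) (fun k => hmem')
    (fun i hi => by have := mem_range.mp hi; omega) (fun k hk => by have := mem_Icc.mp hk; omega)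
    fun i hi =>
      padicValNat_pow_sub_pow_eq_padicValNat_pow_sub_one hp (mem_range.mp hi).le

theorem padicValNat_card_GL_ge_general
    (p q : ℕ) (hp : p.Prime) (hodd : Odd p) (hq : q.Prime) (hne : q ≠ p)
    (n : ℕ) :
    padicValNat p (Nat.card (GL (Fin n) (ZMod q))) ≥
      ∑ i ∈ Finset.range (n + 1), n / ((p - 1) * p ^ i) := by
  have := Fact.mk hp
  have := Fact.mk hq
  have hpq : ¬ p ∣ q := fun h => hne ((Nat.prime_dvd_prime_iff_eq hp hq).mp h).symm
  have hp1 : p - 1 ≠ 0 := by have := hp.two_le; omega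
  have hfermat : p ∣ q ^ (p - 1) - 1 := (Nat.modEq_iff_dvd' (Nat.one_le_pow _ _ hq.pos)).mp
    (Nat.ModEq.pow_card_sub_one_eq_one hp ((Nat.coprime_primes hq hp).mpr hne)).symm
  set N := n / (p - 1)
  calc ∑ i ∈ range (n + 1), n / ((p - 1) * p ^ i)
      = ∑ i ∈ range (n + 1), N / p ^ i := by simp_rw [← Nat.div_div_eq_div_mul, N]
    _ = ∑ m ∈ Icc 1 N, (1 + padicValNat p m) := by
      rw [sum_range_div_pow_eq_add_padicValNat_factorial (Nat.div_le_self n _),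
        padicValNat_factorial_eq_sum_Icc, sum_add_distrib, sum_const, Nat.card_Icc, smul_eq_mul,
        mul_one, add_tsub_cancel_right]
    _ ≤ ∑ m ∈ Icc 1 N, padicValNat p ((q ^ (p - 1)) ^ m - 1) := sum_le_sum fun m hm =>
      one_add_padicValNat_le_padicValNat_pow_sub_one hodd (Nat.one_lt_pow hp1 hq.one_lt) hfermat
        (Nat.one_le_iff_ne_zero.mp (mem_Icc.mp hm).1)
    _ ≤ ∑ k ∈ Icc 1 n, padicValNat p (q ^ k - 1) := by
      simp_rw [← pow_mul]
      exact sum_Icc_div_comp_mul_le hp1 (fun k => padicValNat p (q ^ k - 1)) n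
    _ = padicValNat p (Nat.card (GL (Fin n) (ZMod q))) := by
      rw [padicValNat_card_GL_eq_sum (by rwa [ZMod.card]), ZMod.card]

/-- Lower-bound half of the gcd computation in Remark 3.4: for odd primes `p ≠ q`,
`v_p(|GL(n, 𝔽_q)|) ≥ ∑_{i≥0} ⌊n/((p-1)p^i)⌋`. -/
theorem padicValNat_card_GL_ge
    (p q : ℕ) (hp : p.Prime) (hodd : Odd p) (hq : q.Prime) (hne : q ≠ p)
    (n : ℕ) (hn : 1 ≤ n) :
    padicValNat p (Nat.card (GL (Fin n) (ZMod q))) ≥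
      ∑ i ∈ Finset.range (n + 1), n / ((p - 1) * p ^ i) :=
  padicValNat_card_GL_ge_general p q hp hodd hq hne n
end
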